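/- arXiv:0909.3653 — 2 statements merged into one kernel-verified Lean document; each statement's English description precedes it below -/
import Mathlib

section
/- For every real number c ≥ 0, the integral of e^{−cξ}·ξ^{1/2}/(1+e^{ξ}) over ξ from 0 to ∞ equals Γ(3/2)·[2^{−1/2}·ζ(3/2, (c+1)/2) − ζ(3/2, c+1)], where ζ(s, q) denotes the Hurwitz zeta function. -/
/-!
Expanding `1 / (1 + e^ξ) = ∑ (-1)^n e^{-(n+1)ξ}` and integrating termwise against
`ξ^(s-1) e^{-cξ}` gives `Γ(s) ∑ (-1)^n (n + c + 1)^(-s)`; the interchange is legitimate because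
for `s > 1` the integrals of the absolute values form the convergent series `Γ(s) ζ(s, c + 1)`.
Splitting the alternating series into even and odd terms, each a rescaled Hurwitz series,
identifies it with `2^(1-s) ζ(s, (c+1)/2) - ζ(s, c+1)`.
-/

/-- The Hurwitz zeta function for real s > 1 and q > 0, defined by its series
ζ(s, q) = Σ_{n=0}^∞ (n+q)^{−s}. -/
noncomputable def hurwitzZetaReal (s q : ℝ) : ℝ := ∑' n : ℕ, 1 / ((n : ℝ) + q) ^ s

open MeasureTheory Real Set

section HurwitzSeries

variable {s q : ℝ}

lemma summable_one_div_nat_add_rpow (hs : 1 < s) (hq : 0 ≤ q) :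
    Summable fun n : ℕ => 1 / ((n : ℝ) + q) ^ s :=
  ((Real.summable_one_div_nat_add_rpow q s).2 hs).congr fun n => by
    rw [abs_of_nonneg (by positivity)]

lemma hasSum_hurwitzZetaReal (hs : 1 < s) (hq : 0 ≤ q) :
    HasSum (fun n : ℕ => 1 / ((n : ℝ) + q) ^ s) (hurwitzZetaReal s q) :=
  (summable_one_div_nat_add_rpow hs hq).hasSum

lemma one_div_two_mul_rpow {x : ℝ} (hx : 0 ≤ x) (s : ℝ) :
    1 / (2 * x) ^ s = 2 ^ (-s) * (1 / x ^ s) := by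
  rw [mul_rpow zero_le_two hx, rpow_neg zero_le_two]
  ring

lemma hasSum_hurwitzZetaReal_even (hs : 1 < s) (hq : 0 ≤ q) :
    HasSum (fun k : ℕ => 1 / (((2 * k : ℕ) : ℝ) + q) ^ s)
      (2 ^ (-s) * hurwitzZetaReal s (q / 2)) :=
  ((hasSum_hurwitzZetaReal hs (by positivity)).mul_left _).congr_fun fun k => by
    rw [← one_div_two_mul_rpow (by positivity)]
    push_cast
    ring_nf

lemma hasSum_hurwitzZetaReal_odd (hs : 1 < s) (hq : 0 ≤ q) :
    HasSum (fun k : ℕ => 1 / (((2 * k + 1 : ℕ) : ℝ) + q) ^ s)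
      (2 ^ (-s) * hurwitzZetaReal s ((q + 1) / 2)) :=
  ((hasSum_hurwitzZetaReal hs (by positivity)).mul_left _).congr_fun fun k => by
    rw [← one_div_two_mul_rpow (by positivity)]
    push_cast
    ring_nf

theorem hasSum_neg_one_pow_div_nat_add_rpow (hs : 1 < s) (hq : 0 ≤ q) :
    HasSum (fun n : ℕ => (-1) ^ n / ((n : ℝ) + q) ^ s)
      (2 ^ (1 - s) * hurwitzZetaReal s (q / 2) - hurwitzZetaReal s q) := by
  have he := hasSum_hurwitzZetaReal_even hs hq
  have ho := hasSum_hurwitzZetaReal_odd hs hq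
  have hζ := (hasSum_hurwitzZetaReal hs hq).unique (he.even_add_odd ho)
  have h2 : (2 : ℝ) ^ (1 - s) = 2 * 2 ^ (-s) := by
    rw [sub_eq_add_neg, rpow_add two_pos, rpow_one]
  rw [hζ, h2]
  convert (he.congr_fun fun k => ?_).even_add_odd (ho.neg.congr_fun fun k => ?_) using 1
  · ring
  · simp [pow_mul]
  · simp [pow_succ, pow_mul, neg_div]

end HurwitzSeries

lemma integrableOn_rpow_sub_one_mul_exp_neg_mul {s r : ℝ} (hs : 0 < s) (hr : 0 < r) :
    IntegrableOn (fun ξ : ℝ => ξ ^ (s - 1) * exp (-(r * ξ))) (Ioi 0) :=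
  (integrableOn_rpow_mul_exp_neg_mul_rpow (s := s - 1) (by linarith) one_pos hr).congr_fun
    (fun ξ _ => by simp only [rpow_one, neg_mul]) measurableSet_Ioi

lemma integral_rpow_sub_one_mul_exp_neg_mul {s r : ℝ} (hs : 0 < s) (hr : 0 < r) :
    ∫ ξ in Ioi 0, ξ ^ (s - 1) * exp (-(r * ξ)) = Gamma s * (1 / r ^ s) := by
  rw [integral_rpow_mul_exp_neg_mul_Ioi hs hr, div_rpow zero_le_one hr.le, one_rpow, mul_comm]

lemma hasSum_exp_neg_mul_div_one_add_exp (c : ℝ) {ξ : ℝ} (hξ : 0 < ξ) :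
    HasSum (fun n : ℕ => (-1) ^ n * exp (-((n + (c + 1)) * ξ)))
      (exp (-c * ξ) / (1 + exp ξ)) := by
  have hρ : |-exp (-ξ)| < 1 := by
    rw [abs_neg, abs_of_pos (exp_pos _), Real.exp_lt_one_iff]
    linarith
  have hval : exp (-((c + 1) * ξ)) * (1 - -exp (-ξ))⁻¹ = exp (-c * ξ) / (1 + exp ξ) := by
    rw [show -((c + 1) * ξ) = -c * ξ + -ξ by ring, exp_add, exp_neg ξ, sub_neg_eq_add]
    field_simp
    ring
  rw [← hval]
  refine ((hasSum_geometric_of_abs_lt_one hρ).mul_left _).congr_fun fun n => ?_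
  rw [neg_pow (exp (-ξ)), ← exp_nat_mul, mul_left_comm, ← exp_add]
  ring_nf

theorem integral_exp_neg_mul_rpow_div_one_add_exp {s c : ℝ} (hs : 1 < s) (hc : -1 < c) :
    ∫ ξ in Ioi 0, exp (-c * ξ) * ξ ^ (s - 1) / (1 + exp ξ) =
      Gamma s * (2 ^ (1 - s) * hurwitzZetaReal s ((c + 1) / 2) - hurwitzZetaReal s (c + 1)) := by
  have hq : 0 < c + 1 := by linarith
  have hr (n : ℕ) : 0 < n + (c + 1) := by positivity
  set F : ℕ → ℝ → ℝ := fun n ξ => ξ ^ (s - 1) * ((-1) ^ n * exp (-((n + (c + 1)) * ξ)))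
  have hF_int (n : ℕ) : IntegrableOn (F n) (Ioi 0) :=
    IntegrableOn.congr_fun
      ((integrableOn_rpow_sub_one_mul_exp_neg_mul (s := s) (by linarith) (hr n)).const_mul
        ((-1) ^ n))
      (fun ξ _ => by ring) measurableSet_Ioi
  have hF (n : ℕ) : ∫ ξ in Ioi 0, F n ξ = Gamma s * ((-1) ^ n / (n + (c + 1)) ^ s) := by
    simp only [F, mul_left_comm _ ((-1 : ℝ) ^ n)]
    rw [integral_const_mul, integral_rpow_sub_one_mul_exp_neg_mul (by linarith) (hr n)]
    ring
  have hF_norm (n : ℕ) : ∫ ξ in Ioi 0, ‖F n ξ‖ = Gamma s * (1 / (n + (c + 1)) ^ s) := by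
    have h (ξ : ℝ) (hξ : ξ ∈ Ioi 0) :
        ‖F n ξ‖ = ξ ^ (s - 1) * exp (-((n + (c + 1)) * ξ)) := by
      simp [F, abs_of_pos (rpow_pos_of_pos hξ _)]
    rw [setIntegral_congr_fun measurableSet_Ioi h,
      integral_rpow_sub_one_mul_exp_neg_mul (by linarith) (hr n)]
  have hsum := hasSum_integral_of_summable_integral_norm hF_int
    (by simpa only [hF_norm] using (summable_one_div_nat_add_rpow hs hq.le).mul_left (Gamma s))
  have hpt (ξ : ℝ) (hξ : ξ ∈ Ioi 0) :
      ∑' n, F n ξ = exp (-c * ξ) * ξ ^ (s - 1) / (1 + exp ξ) := by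
    rw [((hasSum_exp_neg_mul_div_one_add_exp c hξ).mul_left (ξ ^ (s - 1))).tsum_eq]
    ring
  rw [setIntegral_congr_fun measurableSet_Ioi hpt] at hsum
  simp only [hF] at hsum
  exact hsum.unique ((hasSum_neg_one_pow_div_nat_add_rpow hs hq.le).mul_left _)

/-- for real c ≥ 0,
∫_0^∞ e^{−cξ}·ξ^{1/2}/(1+e^ξ) dξ = Γ(3/2)·[2^{−1/2}·ζ(3/2,(c+1)/2) − ζ(3/2,c+1)]. -/
theorem fermiDirac_half_exp_hurwitz (c : ℝ) (hc : 0 ≤ c) :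
    (∫ ξ in Set.Ioi (0 : ℝ), Real.exp (-c * ξ) * ξ ^ ((1 : ℝ) / 2) / (1 + Real.exp ξ)) =
      Real.Gamma (3 / 2) *
        ((2 : ℝ) ^ (-(1 : ℝ) / 2) * hurwitzZetaReal (3 / 2) ((c + 1) / 2) -
          hurwitzZetaReal (3 / 2) (c + 1)) := by
  rw [show (1 : ℝ) / 2 = 3 / 2 - 1 by norm_num, show -(1 : ℝ) / 2 = 1 - 3 / 2 by norm_num]
  exact integral_exp_neg_mul_rpow_div_one_add_exp (by norm_num) (by linarith)
end

section
/- For every natural number k ≥ 1 and every real number c ≥ 0, the integral of e^{−cξ}·ξ^{k/2}/(1+e^{ξ}) over ξ from 0 to ∞ equals Γ(1+k/2)·Σ_{n=0}^∞ (−1)^n/(c+1+n)^{1+k/2}. -/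
/-!
Expanding `1 / (1 + e^ξ) = e^{-ξ} / (1 + e^{-ξ})` as a geometric series in `-e^{-ξ}` writes the
integrand as `ξ^{s-1} Σ (-1)^n e^{-(c+1+n)ξ}` with `s = 1 + k/2`. Each term has Mellin transform
`Γ(s) (-1)^n / (c+1+n)^s`, and since `s > 1` these are absolutely summable, so the series can be
integrated term by term (`hasSum_mellin`).
-/

open MeasureTheory Set Real

lemma hasSum_neg_one_pow_mul_exp (c : ℝ) {t : ℝ} (ht : 0 < t) :
    HasSum (fun n : ℕ ↦ (-1 : ℝ) ^ n * rexp (-(c + 1 + n) * t)) (rexp (-c * t) / (1 + rexp t)) := by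
  have hr : ‖-rexp (-t)‖ < 1 := by
    rw [norm_neg, norm_of_nonneg (exp_pos _).le, exp_lt_one_iff]
    linarith
  have hterm (n : ℕ) :
      (-1 : ℝ) ^ n * rexp (-(c + 1 + n) * t) = (-rexp (-t)) ^ n * rexp (-(c + 1) * t) := by
    rw [neg_pow (rexp (-t)), ← exp_nat_mul, mul_assoc, ← exp_add]
    congr 2
    ring
  have hsum : (1 - -rexp (-t))⁻¹ * rexp (-(c + 1) * t) = rexp (-c * t) / (1 + rexp t) := by
    rw [show -(c + 1) * t = -c * t + -t by ring, exp_add, exp_neg t, sub_neg_eq_add]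
    field_simp
    ring
  simpa only [hterm, hsum] using (hasSum_geometric_of_norm_lt_one hr).mul_right (rexp (-(c + 1) * t))

lemma summable_norm_neg_one_pow_div_rpow {a s : ℝ} (ha : 0 < a) (hs : 1 < s) :
    Summable fun n : ℕ ↦ ‖(-1 : ℂ) ^ n‖ / (a + n) ^ s := by
  refine ((Real.summable_one_div_nat_add_rpow a s).mpr hs).congr fun n ↦ ?_
  rw [norm_pow, norm_neg, norm_one, one_pow, add_comm a, abs_of_pos (by positivity)]

lemma mellin_ofReal (f : ℝ → ℝ) (s : ℝ) :
    mellin (fun t ↦ (f t : ℂ)) s = ((∫ t in Ioi 0, t ^ (s - 1) * f t : ℝ) : ℂ) := by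
  refine (setIntegral_congr_fun measurableSet_Ioi fun t ht ↦ ?_).trans integral_ofReal
  rw [smul_eq_mul, ← Complex.ofReal_one, ← Complex.ofReal_sub, ← Complex.ofReal_cpow (le_of_lt ht)]
  exact (Complex.ofReal_mul _ _).symm

theorem hasSum_integral_exp_mul_rpow_div_one_add_exp {c s : ℝ} (hc : -1 < c) (hs : 1 < s) :
    HasSum (fun n : ℕ ↦ Gamma s * ((-1) ^ n / (c + 1 + n) ^ s))
      (∫ ξ in Ioi 0, rexp (-c * ξ) * ξ ^ (s - 1) / (1 + rexp ξ)) := by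
  have hp (n : ℕ) : 0 < c + 1 + n := by linarith [n.cast_nonneg (α := ℝ)]
  have hmellin := hasSum_mellin (a := fun n : ℕ ↦ (-1 : ℂ) ^ n) (p := fun n ↦ c + 1 + n)
    (F := fun t ↦ ((rexp (-c * t) / (1 + rexp t) : ℝ) : ℂ)) (s := s) (fun n ↦ Or.inr (hp n))
    (by simpa using hs.trans' one_pos)
    (fun t ht ↦ by exact_mod_cast Complex.hasSum_ofReal.mpr (hasSum_neg_one_pow_mul_exp c ht))
    (by simpa using summable_norm_neg_one_pow_div_rpow (by linarith) hs)
  rw [mellin_ofReal] at hmellin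
  refine Complex.hasSum_ofReal.mp ?_
  convert hmellin using 1
  · ext n
    rw [Complex.Gamma_ofReal, ← Complex.ofReal_cpow (hp n).le]
    push_cast
    ring
  · congr 2 with ξ
    ring

/-- for natural k ≥ 1 and real c ≥ 0,
∫_0^∞ e^{−cξ}·ξ^{k/2}/(1+e^ξ) dξ = Γ(1+k/2)·Σ_{n=0}^∞ (−1)^n/(c+1+n)^{1+k/2}. -/
theorem fermiDirac_general_exp_series (k : ℕ) (hk : 1 ≤ k) (c : ℝ) (hc : 0 ≤ c) :
    (∫ ξ in Set.Ioi (0 : ℝ), Real.exp (-c * ξ) * ξ ^ ((k : ℝ) / 2) / (1 + Real.exp ξ)) =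
      Real.Gamma (1 + (k : ℝ) / 2) *
        ∑' n : ℕ, (-1 : ℝ) ^ n / (c + 1 + (n : ℝ)) ^ (1 + (k : ℝ) / 2) := by
  have hs : 1 < 1 + (k : ℝ) / 2 := by
    have : (1 : ℝ) ≤ k := by exact_mod_cast hk
    linarith
  have h := hasSum_integral_exp_mul_rpow_div_one_add_exp (by linarith : -1 < c) hs
  rw [add_sub_cancel_left] at h
  rw [← h.tsum_eq, tsum_mul_left]
end
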